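/- arXiv:2103.15189 — 5 statements merged into one kernel-verified Lean document; each statement's English description precedes it below -/
import Mathlib

section
/- Let C be a closed convex subset of a finite-dimensional real inner product space E, and let p, q ∈ E with p ≠ q be such that the closed segment [p, q] is contained in C. Then for any two points x and y lying in the open segment between p and q, the tangent cones of C at x and at y coincide: K_x C = K_y C. -/
/-- The tangent cone of a convex set `C` at a point `x`: the closure of the set of all
nonnegative multiples of differences `z - x` with `z ∈ C`. -/
def convexTangentCone {E : Type*} [NormedAddCommGroup E] [InnerProductSpace ℝ E]
    (C : Set E) (x : E) : Set E :=
  closure {v : E | ∃ l : ℝ, 0 ≤ l ∧ ∃ z ∈ C, v = l • (z - x)}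

private lemma preCone_subset {E : Type*} [NormedAddCommGroup E] [InnerProductSpace ℝ E]
    (C : Set E) (hCconv : Convex ℝ C)
    (p q : E) (hseg : segment ℝ p q ⊆ C)
    (x y : E) (hx : x ∈ openSegment ℝ p q) (hy : y ∈ openSegment ℝ p q) :
    {v : E | ∃ l : ℝ, 0 ≤ l ∧ ∃ z ∈ C, v = l • (z - y)} ⊆
      {v : E | ∃ l : ℝ, 0 ≤ l ∧ ∃ z ∈ C, v = l • (z - x)} := by
  obtain ⟨a1, b1, ha1, hb1, hab1, hx'⟩ := hx
  obtain ⟨a2, b2, ha2, hb2, hab2, hy'⟩ := hy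
  rintro v ⟨l, hl, z, hz, rfl⟩
  rcases eq_or_lt_of_le hl with hl0 | hl0
  · exact ⟨0, le_refl 0, z, hz, by simp [← hl0]⟩
  set t : ℝ := min a1 b1 with hyt
  have ht : 0 < t := lt_min ha1 hb1
  have hta : t ≤ a1 := min_le_left _ _
  have htb : t ≤ b1 := min_le_right _ _
  have ht1 : t < 1 := lt_of_le_of_lt hta (by linarith)
  have hst : (0:ℝ) < 1 - t := by linarith
  have hstne : (1 - t : ℝ) ≠ 0 := ne_of_gt hst
  set c : ℝ := (a1 - t * a2) / (1 - t) with hc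
  set d : ℝ := (b1 - t * b2) / (1 - t) with hd
  have hcnn : 0 ≤ c := by
    apply div_nonneg _ (le_of_lt hst)
    nlinarith
  have hdnn : 0 ≤ d := by
    apply div_nonneg _ (le_of_lt hst)
    nlinarith
  have hcd : c + d = 1 := by
    rw [hc, hd]
    field_simp
    nlinarith [hab1, hab2]
  have hu : c • p + d • q ∈ C := hseg ⟨c, d, hcnn, hdnn, hcd, rfl⟩
  have hw : (1 - t) • (c • p + d • q) + t • z ∈ C :=
    hCconv hu hz (le_of_lt hst) (le_of_lt ht) (by ring)
  have hkey : (1 - t) • (c • p + d • q) + t • z - x = t • (z - y) := by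
    rw [← hx', ← hy', hc, hd]
    match_scalars <;> field_simp <;> ring
  refine ⟨l / t, by positivity, _, hw, ?_⟩
  rw [hkey, smul_smul, div_mul_cancel₀ _ (ne_of_gt ht)]

/-- Flat case of the Key Lemma: the tangent cones of a closed convex set are constant
along the open segment of any segment contained in the set. -/
theorem tangentCone_eq_of_mem_openSegment
    {E : Type*} [NormedAddCommGroup E] [InnerProductSpace ℝ E] [FiniteDimensional ℝ E]
    (C : Set E) (hCclosed : IsClosed C) (hCconv : Convex ℝ C)
    (p q : E) (hpq : p ≠ q) (hseg : segment ℝ p q ⊆ C)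
    (x y : E) (hx : x ∈ openSegment ℝ p q) (hy : y ∈ openSegment ℝ p q) :
    convexTangentCone C x = convexTangentCone C y := by
  unfold convexTangentCone
  apply le_antisymm <;> apply closure_mono
  · exact preCone_subset C hCconv p q hseg y x hy hx
  · exact preCone_subset C hCconv p q hseg x y hx hy
end

section
/- Let C be a closed convex subset of a finite-dimensional real inner product space E, let p, q ∈ C, and let u ∈ K_p C and v ∈ K_q C. Then for every t ∈ [0, 1], the vector (1−t) • u + t • v belongs to the tangent cone K_{(1−t) • p + t • q} C. -/
private lemma preCone_add_mem {E : Type*} [NormedAddCommGroup E] [InnerProductSpace ℝ E]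
    {C : Set E} (hCconv : Convex ℝ C) (x : E) {a b : ℝ} (ha : 0 ≤ a) (hb : 0 ≤ b)
    {z w : E} (hz : z ∈ C) (hw : w ∈ C) :
    a • (z - x) + b • (w - x) ∈ {v : E | ∃ l : ℝ, 0 ≤ l ∧ ∃ z ∈ C, v = l • (z - x)} := by
  rcases eq_or_lt_of_le (add_nonneg ha hb) with h0 | h0
  · have ha0 : a = 0 := by linarith [ha, hb]
    have hb0 : b = 0 := by linarith
    exact ⟨0, le_refl 0, z, hz, by simp [ha0, hb0]⟩
  · refine ⟨a + b, le_of_lt h0, (a / (a + b)) • z + (b / (a + b)) • w,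
      hCconv hz hw (div_nonneg ha h0.le) (div_nonneg hb h0.le) (by field_simp), ?_⟩
    have hne : a + b ≠ 0 := ne_of_gt h0
    rw [smul_sub, smul_sub, smul_sub, smul_add, smul_smul, smul_smul]
    field_simp
    module

/-- Flat case of the Observation in the proof of the Key Lemma: the affine interpolation of
vectors in the tangent cones at two points of a closed convex set lies in the tangent cone
at the corresponding interpolated point. -/
theorem affine_comb_mem_tangentCone
    {E : Type*} [NormedAddCommGroup E] [InnerProductSpace ℝ E] [FiniteDimensional ℝ E]
    (C : Set E) (hCclosed : IsClosed C) (hCconv : Convex ℝ C)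
    (p q : E) (hp : p ∈ C) (hq : q ∈ C)
    (u v : E) (hu : u ∈ convexTangentCone C p) (hv : v ∈ convexTangentCone C q)
    (t : ℝ) (ht0 : 0 ≤ t) (ht1 : t ≤ 1) :
    (1 - t) • u + t • v ∈ convexTangentCone C ((1 - t) • p + t • q) := by
  set x := (1 - t) • p + t • q with hx
  set Sp := {v : E | ∃ l : ℝ, 0 ≤ l ∧ ∃ z ∈ C, v = l • (z - p)} with hSp
  set Sq := {v : E | ∃ l : ℝ, 0 ≤ l ∧ ∃ z ∈ C, v = l • (z - q)} with hSq
  set Sx := {v : E | ∃ l : ℝ, 0 ≤ l ∧ ∃ z ∈ C, v = l • (z - x)} with hSx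
  -- the map
  have hf : Continuous (fun uv : E × E => (1 - t) • uv.1 + t • uv.2) :=
    (continuous_fst.const_smul _).add (continuous_snd.const_smul _)
  have key : ∀ a ∈ Sp, ∀ b ∈ Sq, (1 - t) • a + t • b ∈ Sx := by
    rintro a ⟨la, hla, z, hz, rfl⟩ b ⟨lb, hlb, w, hw, rfl⟩
    have hz1 : (1 - t) • z + t • q ∈ C := hCconv hz hq (by linarith) ht0 (by ring)
    have hw1 : (1 - t) • p + t • w ∈ C := hCconv hp hw (by linarith) ht0 (by ring)
    have e1 : (1 - t) • (la • (z - p)) = la • (((1 - t) • z + t • q) - x) := by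
      rw [hx]; rw [smul_comm]; congr 1; module
    have e2 : t • (lb • (w - q)) = lb • (((1 - t) • p + t • w) - x) := by
      rw [hx]; rw [smul_comm]; congr 1; module
    rw [e1, e2]
    exact preCone_add_mem hCconv x hla hlb hz1 hw1
  have himg : (fun uv : E × E => (1 - t) • uv.1 + t • uv.2) '' (Sp ×ˢ Sq) ⊆ Sx := by
    rintro _ ⟨⟨a, b⟩, ⟨haS, hbS⟩, rfl⟩
    exact key a haS b hbS
  have hmem : (u, v) ∈ closure (Sp ×ˢ Sq) := by
    rw [closure_prod_eq]
    exact ⟨hu, hv⟩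
  have := image_closure_subset_closure_image hf (Set.mem_image_of_mem _ hmem)
  exact closure_mono himg this
end

section
/- Let C be a closed convex subset of a finite-dimensional real inner product space E and let k ≥ 1 be a natural number. Then the set of points x ∈ C of rank at most k, i.e. the set {x ∈ C : every linear subspace V of E with V ⊆ K_x C satisfies dim V ≤ k}, is countably k-rectifiable: there exists a sequence of Lipschitz maps f_n : ℝ^k → E (n ∈ ℕ) such that this set is contained in the union of the images of the f_n. -/
open Set Submodule Module TopologicalSpace
open scoped RealInnerProductSpace Pointwise

theorem exists_sup_span_range_comp_eq_top {K V ι : Type*} [DivisionRing K] [AddCommGroup V]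
    [Module K V] [FiniteDimensional K V] [Nonempty ι] {v : ι → V}
    (hv : span K (range v) = ⊤) :
    ∀ (k : ℕ) (S : Submodule K V), finrank K V ≤ finrank K S + k →
      ∃ σ : Fin k → ι, S ⊔ span K (range (v ∘ σ)) = ⊤
  | 0, S, hS => ⟨Fin.elim0, by
      rw [eq_top_of_finrank_eq (le_antisymm (finrank_le S) hS), top_sup_eq]⟩
  | k + 1, S, hS => by
    by_cases hS_top : S = ⊤
    · exact ⟨fun _ => Classical.arbitrary ι, by rw [hS_top, top_sup_eq]⟩
    obtain ⟨i, hi⟩ : ∃ i, v i ∉ S := by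
      by_contra! h
      exact hS_top (eq_top_iff.2 (hv ▸ span_le.2 (range_subset_iff.2 h)))
    have hlt : S < S ⊔ K ∙ v i :=
      SetLike.lt_iff_le_and_exists.2
        ⟨le_sup_left, v i, mem_sup_right (mem_span_singleton_self _), hi⟩
    obtain ⟨σ, hσ⟩ := exists_sup_span_range_comp_eq_top hv k (S ⊔ K ∙ v i)
      (by have := finrank_lt_finrank_of_lt hlt; omega)
    refine ⟨Fin.cons i σ, ?_⟩
    rwa [Fin.comp_cons, Fin.range_cons, span_insert, ← sup_assoc]

theorem span_eq_top_of_dense {𝕜 E : Type*} [NontriviallyNormedField 𝕜] [CompleteSpace 𝕜]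
    [NormedAddCommGroup E] [NormedSpace 𝕜 E] [FiniteDimensional 𝕜 E] {s : Set E}
    (hs : Dense s) : span 𝕜 s = ⊤ := by
  refine eq_top_iff'.2 fun y => ?_
  have : closure s ⊆ span 𝕜 s := (closed_of_finiteDimensional _).closure_subset_iff.2 subset_span
  exact this (hs.closure_eq ▸ mem_univ y)

section

variable {E : Type*} [NormedAddCommGroup E] [NormedSpace ℝ E] [FiniteDimensional ℝ E]

theorem Convex.interior_nonempty_of_zero_mem_of_span_eq_top {s : Set E} (hs : Convex ℝ s)
    (h0 : (0 : E) ∈ s) (hspan : span ℝ s = ⊤) : (interior s).Nonempty := by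
  rw [hs.interior_nonempty_iff_affineSpan_eq_top,
    AffineSubspace.affineSpan_eq_top_iff_vectorSpan_eq_top_of_nonempty _ _ _ ⟨0, h0⟩,
    vectorSpan_eq_span_vsub_set_right ℝ h0]
  simpa using hspan

theorem Dense.exists_sub_mem_add {D N : Set E} (hD : Dense D) (hN : Convex ℝ N) (h0 : (0 : E) ∈ N)
    {V : Submodule ℝ E} (hNV : span ℝ N ⊔ V = ⊤) (x : E) : ∃ q ∈ D, q - x ∈ N + (V : Set E) := by
  have hspan : span ℝ (N + (V : Set E)) = ⊤ := by
    refine eq_top_iff.2 (hNV ▸ sup_le (span_mono (subset_add_left N V.zero_mem)) ?_)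
    exact (subset_add_right (V : Set E) h0).trans subset_span
  obtain ⟨y, hy⟩ := (hN.add V.convex).interior_nonempty_of_zero_mem_of_span_eq_top
    (by simpa using Set.add_mem_add h0 V.zero_mem) hspan
  obtain ⟨q, hqD, hq⟩ :=
    hD.exists_mem_open (isOpen_interior.preimage (continuous_sub_right x)) ⟨y + x, by simpa⟩
  exact ⟨q, hqD, interior_subset hq⟩

end

section NormalCone

variable {E : Type*} [NormedAddCommGroup E] [InnerProductSpace ℝ E] {C : Set E} {x : E}

def normalCone (C : Set E) (x : E) : Set E := {v | ∀ z ∈ C, ⟪v, z - x⟫ ≤ 0}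

theorem zero_mem_normalCone : (0 : E) ∈ normalCone C x := fun z _ => by simp

theorem convex_normalCone : Convex ℝ (normalCone C x) := by
  intro v hv w hw a b ha hb _ z hz
  rw [inner_add_left, real_inner_smul_left, real_inner_smul_left]
  nlinarith [hv z hz, hw z hz]

theorem norm_sub_le_of_sub_mem_normalCone {a b u v : E} (ha : a ∈ C) (hb : b ∈ C)
    (hu : u - a ∈ normalCone C a) (hv : v - b ∈ normalCone C b) : ‖a - b‖ ≤ ‖u - v‖ := by
  have hab : ‖a - b‖ ^ 2 ≤ ⟪u - v, a - b⟫ := by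
    have hsplit : ⟪u - v, a - b⟫ - ‖a - b‖ ^ 2 = -⟪u - a, b - a⟫ - ⟪v - b, a - b⟫ := by
      rw [← real_inner_self_eq_norm_sq, ← neg_sub a b, inner_neg_right]
      simp only [inner_sub_left, inner_sub_right, real_inner_comm]
      ring
    linarith [hu b hb, hv a ha]
  nlinarith [real_inner_le_norm (u - v) (a - b), norm_nonneg (a - b), norm_nonneg (u - v)]

theorem convexTangentCone_eq_closure_hull (hconv : Convex ℝ C) (hx : x ∈ C) :
    convexTangentCone C x = closure (ConvexCone.hull ℝ ((· - x) '' C)) := by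
  have hs : Convex ℝ ((· - x) '' C) := by simpa [sub_eq_neg_add] using hconv.translate (-x)
  unfold convexTangentCone
  congr 1
  ext v
  simp only [mem_ofPred_eq, SetLike.mem_coe, ConvexCone.mem_hull_of_convex hs, mem_smul_set,
    exists_exists_and_eq_and, mem_image]
  constructor
  · rintro ⟨l, hl, z, hz, rfl⟩
    rcases hl.eq_or_lt with rfl | hl
    · exact ⟨1, one_pos, x, hx, by simp⟩
    · exact ⟨l, hl, z, hz, rfl⟩
  · rintro ⟨l, hl, z, hz, rfl⟩
    exact ⟨l, hl.le, z, hz, rfl⟩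

variable [CompleteSpace E]

theorem exists_sub_mem_normalCone (hne : C.Nonempty) (hC : IsClosed C) (hconv : Convex ℝ C)
    (y : E) : ∃ a ∈ C, y - a ∈ normalCone C a := by
  obtain ⟨a, ha, hmin⟩ := exists_norm_eq_iInf_of_complete_convex hne hC.isComplete hconv y
  exact ⟨a, ha, (norm_eq_iInf_iff_real_inner_le_zero hconv ha).1 hmin⟩

theorem exists_lipschitzWith_one_map_add_normalCone (hC : IsClosed C) (hconv : Convex ℝ C) :
    ∃ P : E → E, LipschitzWith 1 P ∧ ∀ x ∈ C, ∀ v ∈ normalCone C x, P (x + v) = x := by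
  rcases C.eq_empty_or_nonempty with rfl | hne
  · exact ⟨id, LipschitzWith.id, by simp⟩
  choose P hPC hPn using exists_sub_mem_normalCone hne hC hconv
  refine ⟨P, LipschitzWith.of_dist_le_mul fun y y' => ?_, fun x hx v hv => ?_⟩
  · simpa [dist_eq_norm] using
      norm_sub_le_of_sub_mem_normalCone (hPC y) (hPC y') (hPn y) (hPn y')
  · have := norm_sub_le_of_sub_mem_normalCone (hPC (x + v)) hx (hPn _)
      (by simpa using hv : x + v - x ∈ normalCone C x)
    simpa [sub_eq_zero] using this

theorem orthogonal_span_normalCone_subset_convexTangentCone (hconv : Convex ℝ C) (hx : x ∈ C) :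
    ((span ℝ (normalCone C x))ᗮ : Set E) ⊆ convexTangentCone C x := by
  intro w hw
  by_contra hwK
  let K : ProperCone ℝ E :=
    ⟨(ConvexCone.hull ℝ ((· - x) '' C)).closure.toPointedCone
      (subset_closure (ConvexCone.subset_hull ⟨x, hx, sub_self x⟩)), isClosed_closure⟩
  have hK : (K : Set E) = convexTangentCone C x := (convexTangentCone_eq_closure_hull hconv hx).symm
  obtain ⟨y, hyK, hyw⟩ := K.hyperplane_separation' (hK ▸ hwK)
  have hy : -y ∈ normalCone C x := fun z hz => by
    have := hyK (z - x) (subset_closure (ConvexCone.subset_hull ⟨z, hz, rfl⟩))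
    rw [inner_neg_left, real_inner_comm]
    linarith
  have := (mem_orthogonal _ w).1 hw (-y) (subset_span hy)
  rw [inner_neg_left, real_inner_comm] at this
  linarith

theorem finrank_le_finrank_span_normalCone_add [FiniteDimensional ℝ E] (hconv : Convex ℝ C)
    (hx : x ∈ C) {k : ℕ}
    (hrank : ∀ V : Submodule ℝ E, (V : Set E) ⊆ convexTangentCone C x → finrank ℝ V ≤ k) :
    finrank ℝ E ≤ finrank ℝ (span ℝ (normalCone C x)) + k := by
  have := hrank _ (orthogonal_span_normalCone_subset_convexTangentCone hconv hx)
  have := finrank_add_finrank_orthogonal (span ℝ (normalCone C x))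
  omega

end NormalCone

theorem exists_euclidean_continuousLinearMap_range_eq_span {E : Type*} [NormedAddCommGroup E]
    [NormedSpace ℝ E] {k : ℕ} (w : Fin k → E) :
    ∃ L : EuclideanSpace ℝ (Fin k) →L[ℝ] E,
      LinearMap.range (L : EuclideanSpace ℝ (Fin k) →ₗ[ℝ] E) = span ℝ (range w) :=
  ⟨LinearMap.toContinuousLinearMap
      (Fintype.linearCombination ℝ w ∘ₗ (WithLp.linearEquiv 2 ℝ (Fin k → ℝ)).toLinearMap), by
    rw [LinearMap.coe_toContinuousLinearMap, LinearMap.range_comp_of_range_eq_top _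
      (LinearEquiv.range _), Fintype.range_linearCombination]⟩

theorem rank_le_k_set_countably_rectifiable_general
    {E : Type*} [NormedAddCommGroup E] [InnerProductSpace ℝ E] [FiniteDimensional ℝ E]
    (C : Set E) (hCclosed : IsClosed C) (hCconv : Convex ℝ C)
    (k : ℕ) :
    ∃ f : ℕ → EuclideanSpace ℝ (Fin k) → E,
      (∀ n, ∃ c : NNReal, LipschitzWith c (f n)) ∧
      {x ∈ C | ∀ V : Submodule ℝ E, (V : Set E) ⊆ convexTangentCone C x →
          Module.finrank ℝ V ≤ k} ⊆ ⋃ n, Set.range (f n) := by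
  obtain ⟨P, hP, hPC⟩ := exists_lipschitzWith_one_map_add_normalCone hCclosed hCconv
  choose L hL using fun σ : Fin k → ℕ =>
    exists_euclidean_continuousLinearMap_range_eq_span (denseSeq E ∘ σ)
  obtain ⟨e, he⟩ := exists_surjective_nat (ℕ × (Fin k → ℕ))
  refine ⟨fun n t => P (denseSeq E (e n).1 + L (e n).2 t),
    fun n => ⟨_, hP.comp ((LipschitzWith.const _).add (L (e n).2).lipschitz)⟩, ?_⟩
  rintro x ⟨hx, hrank⟩
  obtain ⟨σ, hσ⟩ := exists_sup_span_range_comp_eq_top (span_eq_top_of_dense (denseRange_denseSeq E))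
    k _ (finrank_le_finrank_span_normalCone_add hCconv hx hrank)
  obtain ⟨_, ⟨j, rfl⟩, v, hv, w, hw, hjx⟩ :=
    (denseRange_denseSeq E).exists_sub_mem_add convex_normalCone zero_mem_normalCone hσ x
  obtain ⟨t, ht⟩ : -w ∈ LinearMap.range (L σ : EuclideanSpace ℝ (Fin k) →ₗ[ℝ] E) :=
    hL σ ▸ neg_mem hw
  obtain ⟨n, hn⟩ := he (j, σ)
  refine mem_iUnion.2 ⟨n, t, ?_⟩
  have hpoint : denseSeq E j + L σ t = x + v := by
    rw [ContinuousLinearMap.coe_coe] at ht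
    beta_reduce at hjx
    rw [ht, ← sub_eq_add_neg, ← eq_sub_iff_add_eq.1 hjx]
    abel
  simpa only [hn, hpoint] using hPC x hx v hv

/-- Euclidean case of Proposition 4.1: the set of points of a closed convex set of rank at
most `k` (i.e. every linear subspace contained in the tangent cone has dimension at most `k`)
is countably `k`-rectifiable: it is covered by countably many Lipschitz images of `ℝ^k`. -/
theorem rank_le_k_set_countably_rectifiable
    {E : Type*} [NormedAddCommGroup E] [InnerProductSpace ℝ E] [FiniteDimensional ℝ E]
    (C : Set E) (hCclosed : IsClosed C) (hCconv : Convex ℝ C)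
    (k : ℕ) (hk : 1 ≤ k) :
    ∃ f : ℕ → EuclideanSpace ℝ (Fin k) → E,
      (∀ n, ∃ c : NNReal, LipschitzWith c (f n)) ∧
      {x ∈ C | ∀ V : Submodule ℝ E, (V : Set E) ⊆ convexTangentCone C x →
          Module.finrank ℝ V ≤ k} ⊆ ⋃ n, Set.range (f n) :=
  rank_le_k_set_countably_rectifiable_general C hCclosed hCconv k
end

section
/- Let E be a finite-dimensional real inner product space and let x ∈ E be a nonzero vector. Then the linear span of the set of orthogonal projections P_y onto the lines ℝ • y, where y ranges over all unit vectors of E orthogonal to x, equals the space S_x of all self-adjoint linear operators S : E → E satisfying S x = 0. -/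
/-!
By the spectral theorem a symmetric `S` is `∑ μᵢ P_{bᵢ}` for an orthonormal eigenbasis `b`.
If `S x = 0`, every eigenvector `bᵢ` with `μᵢ ≠ 0` is orthogonal to `x`, because
`μᵢ ⟪bᵢ, x⟫ = ⟪S bᵢ, x⟫ = ⟪bᵢ, S x⟫ = 0`; the terms with `μᵢ = 0` vanish.
-/

open scoped RealInnerProductSpace
open InnerProductSpace

namespace LinearMap.IsSymmetric

variable {𝕜 E : Type*} [RCLike 𝕜] [NormedAddCommGroup E] [InnerProductSpace 𝕜 E]
  {T : E →ₗ[𝕜] E}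

theorem inner_eq_zero_of_apply_eq_smul_of_apply_eq_zero (hT : T.IsSymmetric) {v x : E} {μ : 𝕜}
    (hμ : μ ≠ 0) (hv : T v = μ • v) (hx : T x = 0) : inner 𝕜 v x = 0 := by
  have : (starRingEnd 𝕜) μ * inner 𝕜 v x = 0 := by
    rw [← inner_smul_left, ← hv, hT, hx, inner_zero_right]
  simpa [hμ] using this

theorem eq_sum_eigenvalues_smul_rankOne [FiniteDimensional 𝕜 E] (hT : T.IsSymmetric) {n : ℕ}
    (hn : Module.finrank 𝕜 E = n) :
    T = ∑ i, (hT.eigenvalues hn i : 𝕜) •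
      (rankOne 𝕜 (hT.eigenvectorBasis hn i) (hT.eigenvectorBasis hn i) : E →ₗ[𝕜] E) := by
  ext v
  conv_lhs => rw [← (hT.eigenvectorBasis hn).sum_repr' v]
  simp [map_sum, smul_smul, mul_comm]

end LinearMap.IsSymmetric

section Real

variable {E : Type*} [NormedAddCommGroup E] [InnerProductSpace ℝ E]

def symmetricVanishingAt (x : E) : Submodule ℝ (E →ₗ[ℝ] E) where
  carrier := {S | S.IsSymmetric ∧ S x = 0}
  add_mem' ha hb := ⟨ha.1.add hb.1, by simp [ha.2, hb.2]⟩
  zero_mem' := ⟨.zero, rfl⟩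
  smul_mem' c _ hS := ⟨hS.1.smul (star_trivial c), by simp [hS.2]⟩

theorem rankOne_self_mem_symmetricVanishingAt {x y : E} (hyx : ⟪y, x⟫ = 0) :
    (rankOne ℝ y y : E →ₗ[ℝ] E) ∈ symmetricVanishingAt x :=
  ⟨isSymmetric_rankOne_self y, by simp [hyx]⟩

theorem eq_rankOne_self_of_forall_apply_eq {P : E →ₗ[ℝ] E} {y : E}
    (hP : ∀ v, P v = ⟪v, y⟫ • y) : P = rankOne ℝ y y := by
  ext v
  simp [hP, real_inner_comm]

end Real

theorem span_projections_eq_selfAdjoint_vanishing_general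
    {E : Type*} [NormedAddCommGroup E] [InnerProductSpace ℝ E] [FiniteDimensional ℝ E]
    (x : E) :
    (Submodule.span ℝ
        {P : E →ₗ[ℝ] E | ∃ y : E, ‖y‖ = 1 ∧ ⟪y, x⟫ = 0 ∧ ∀ v : E, P v = ⟪v, y⟫ • y}
      : Set (E →ₗ[ℝ] E)) =
      {S : E →ₗ[ℝ] E | S.IsSymmetric ∧ S x = 0} := by
  change _ = (symmetricVanishingAt x : Set (E →ₗ[ℝ] E))
  rw [SetLike.coe_set_eq]
  refine le_antisymm (Submodule.span_le.mpr ?_) fun S ⟨hS, hSx⟩ => ?_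
  · rintro P ⟨y, -, hyx, hP⟩
    exact eq_rankOne_self_of_forall_apply_eq hP ▸ rankOne_self_mem_symmetricVanishingAt hyx
  · set b := hS.eigenvectorBasis rfl
    set μ := hS.eigenvalues rfl
    rw [hS.eq_sum_eigenvalues_smul_rankOne rfl]
    refine Submodule.sum_mem _ fun i _ => ?_
    rcases eq_or_ne (μ i) 0 with hμ | hμ
    · simp [μ, hμ]
    have hbx : ⟪b i, x⟫ = 0 :=
      hS.inner_eq_zero_of_apply_eq_smul_of_apply_eq_zero hμ (hS.apply_eigenvectorBasis rfl i) hSx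
    refine Submodule.smul_mem _ _ (Submodule.subset_span ⟨b i, b.orthonormal.1 i, hbx, ?_⟩)
    simp [b, real_inner_comm]

/-- First step of the proof of Claim A.2: for a nonzero vector `x`, the orthogonal
projections onto lines spanned by unit vectors orthogonal to `x` span, as a vector space,
the space `S_x` of all self-adjoint operators vanishing at `x`. -/
theorem span_projections_eq_selfAdjoint_vanishing
    {E : Type*} [NormedAddCommGroup E] [InnerProductSpace ℝ E] [FiniteDimensional ℝ E]
    (x : E) (hx : x ≠ 0) :
    (Submodule.span ℝ
        {P : E →ₗ[ℝ] E | ∃ y : E, ‖y‖ = 1 ∧ ⟪y, x⟫ = 0 ∧ ∀ v : E, P v = ⟪v, y⟫ • y}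
      : Set (E →ₗ[ℝ] E)) =
      {S : E →ₗ[ℝ] E | S.IsSymmetric ∧ S x = 0} :=
  span_projections_eq_selfAdjoint_vanishing_general x
end

section
/- Let E be a real vector space of finite dimension m. For a subset S of E let J(S) = convexJoin(S, S) denote the union of all closed segments between pairs of points of S. Then for every subset Q of E, the m-th iterate of J applied to Q is the convex hull of Q: J^[m](Q) = convexHull(Q). -/
open Set

private lemma subset_J {E : Type*} [AddCommGroup E] [Module ℝ E] (S : Set E) :
    S ⊆ convexJoin ℝ S S := fun x hx =>
  (mem_convexJoin).2 ⟨x, hx, x, hx, left_mem_segment ℝ x x⟩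

private lemma J_iter_mono {E : Type*} [AddCommGroup E] [Module ℝ E] (n : ℕ)
    {S T : Set E} (h : S ⊆ T) :
    (fun S : Set E => convexJoin ℝ S S)^[n] S ⊆ (fun S : Set E => convexJoin ℝ S S)^[n] T := by
  induction n generalizing S T with
  | zero => exact h
  | succ n ih =>
    rw [Function.iterate_succ_apply', Function.iterate_succ_apply']
    exact convexJoin_mono (ih h) (ih h)

private lemma subset_J_iter {E : Type*} [AddCommGroup E] [Module ℝ E] (n : ℕ) (S : Set E) :
    S ⊆ (fun S : Set E => convexJoin ℝ S S)^[n] S := by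
  induction n with
  | zero => exact Subset.rfl
  | succ n ih =>
    rw [Function.iterate_succ_apply']
    exact ih.trans (subset_J _)

private lemma convexHull_finset_subset_J_iter {E : Type*} [AddCommGroup E] [Module ℝ E]
    (n : ℕ) (t : Finset E) (hcard : t.card ≤ n + 1) :
    convexHull ℝ (t : Set E) ⊆ (fun S : Set E => convexJoin ℝ S S)^[n] (t : Set E) := by
  classical
  induction n generalizing t with
  | zero =>
    interval_cases h : t.card
    · simp [Finset.card_eq_zero.1 h]
    · obtain ⟨a, rfl⟩ := Finset.card_eq_one.1 h
      simp
  | succ n ih =>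
    rcases le_or_gt t.card (n + 1) with h | h
    · rw [Function.iterate_succ_apply]
      exact (ih t h).trans (J_iter_mono n (subset_J _))
    · obtain ⟨a, ha⟩ := Finset.card_pos.1 (by omega : 0 < t.card)
      have hins : insert a ((t.erase a : Finset E) : Set E) = (t : Set E) := by
        rw [← Finset.coe_insert, Finset.insert_erase ha]
      rcases ((t.erase a : Finset E) : Set E).eq_empty_or_nonempty with he | hne
      · have : (t : Set E) = {a} := by
          rw [← hins, he]; simp
        rw [this]
        simpa using (subset_J_iter (n + 1) {a}) (mem_singleton a)
      · have key : convexHull ℝ (t : Set E)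
            = convexJoin ℝ {a} (convexHull ℝ ((t.erase a : Finset E) : Set E)) := by
          rw [← hins, convexHull_insert hne]
        rw [Function.iterate_succ_apply', key]
        refine convexJoin_mono ?_ ?_
        · exact (singleton_subset_iff.2 (subset_J_iter n (t : Set E) ha))
        · refine (ih (t.erase a) ?_).trans (J_iter_mono n ?_)
          · have := Finset.card_erase_of_mem ha; omega
          · exact Finset.coe_subset.2 (Finset.erase_subset a t)

/-- Euclidean Carathéodory-type statement: in an `m`-dimensional real vector space, iterating
`m` times the operation `J S = convexJoin S S` (the union of all segments between pairs of
points of `S`) starting from any set `Q` yields the convex hull of `Q`. -/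
theorem iterate_convexJoin_eq_convexHull
    {E : Type*} [AddCommGroup E] [Module ℝ E] [FiniteDimensional ℝ E]
    (Q : Set E) :
    (fun S : Set E => convexJoin ℝ S S)^[Module.finrank ℝ E] Q = convexHull ℝ Q := by
  apply Subset.antisymm
  · -- J^[m] Q ⊆ convexHull Q
    have : ∀ n : ℕ, (fun S : Set E => convexJoin ℝ S S)^[n] Q ⊆ convexHull ℝ Q := by
      intro n
      induction n with
      | zero => exact subset_convexHull ℝ Q
      | succ n ih =>
        rw [Function.iterate_succ_apply']
        rintro x hx
        rw [mem_convexJoin] at hx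
        obtain ⟨a, ha, b, hb, hx⟩ := hx
        exact (convex_convexHull ℝ Q).segment_subset (ih ha) (ih hb) hx
    exact this _
  · rw [convexHull_eq_union]
    refine iUnion_subset fun t => iUnion_subset fun hts => iUnion_subset fun hai => ?_
    have hcard : t.card ≤ Module.finrank ℝ E + 1 := by
      have h1 := hai.card_le_finrank_succ
      have h2 : Module.finrank ℝ (vectorSpan ℝ (Set.range ((↑) : t → E)))
          ≤ Module.finrank ℝ E := Submodule.finrank_le _
      simpa using h1.trans (by omega)
    exact (convexHull_finset_subset_J_iter _ t hcard).trans (J_iter_mono _ hts)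
end
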